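/- arXiv:1703.09633 — 3 statements merged into one kernel-verified Lean document; each statement's English description precedes it below -/
import Mathlib

section
/- For every positive integer k and every z in the upper half-plane, the image of G(z,−2k) under the ξ-operator of weight −2k equals (−1)^{k+1}·2^{2k+2}·π times the classical weight 2k+2 Eisenstein series: 2i·y^{−2k}·conjugate( (1/2)(∂/∂x + i·∂/∂y) G(z,−2k) ) = (−1)^{k+1}·2^{2k+2}·π·( (1/2)ζ(−2k−1) + Σ_{n≥1} σ_{2k+1}(n) q^n ). -/
open scoped Real BigOperators
open MeasureTheory

/-- The incomplete Gamma function `Γ(s, x) = ∫_x^∞ t^(s-1) e^(-t) dt`. -/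
noncomputable def incGamma (s x : ℝ) : ℝ := ∫ t in Set.Ioi x, t ^ (s - 1) * Real.exp (-t)

/-- The divisor power sum `σ_m(n) = Σ_{d ∣ n} d^m`. -/
def sigma' (m n : ℕ) : ℕ := ∑ d ∈ n.divisors, d ^ m

/-- The harmonic Maass Eisenstein series `G(z, -2k)`. -/
noncomputable def G (k : ℕ) (z : ℂ) : ℂ :=
  ((2 * k).factorial * riemannZeta (2 * (k : ℂ) + 1)) / (2 * Real.pi) ^ (2 * k)
  + (-1 : ℂ) ^ (k + 1) * (z.im : ℂ) ^ (1 + 2 * k) * 2 ^ (1 + 2 * k) * (Real.pi : ℂ) *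
      riemannZeta (-2 * (k : ℂ) - 1) / (2 * (k : ℂ) + 1)
  + (-1 : ℂ) ^ k / (2 * Real.pi) ^ (2 * k) * (2 * k).factorial *
      ∑' n : ℕ+, ((sigma' (2 * k + 1) n : ℂ)) / ((n : ℕ) : ℂ) ^ (2 * k + 1) *
        Complex.exp (2 * Real.pi * Complex.I * ((n : ℕ) : ℂ) * z)
  + (-1 : ℂ) ^ k / (2 * Real.pi) ^ (2 * k) *
      ∑' n : ℕ+, ((sigma' (2 * k + 1) n : ℂ)) / ((n : ℕ) : ℂ) ^ (2 * k + 1) *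
        ((incGamma (1 + 2 * k) (4 * Real.pi * (n : ℕ) * z.im) : ℝ) : ℂ) *
        Complex.exp (-(2 * Real.pi * Complex.I * ((n : ℕ) : ℂ) * z))

/-- Partial derivative in the real direction `x` of a function on `ℂ ≃ ℝ²`. -/
noncomputable def dZx (f : ℂ → ℂ) (z : ℂ) : ℂ :=
  deriv (fun t : ℝ => f (t + z.im * Complex.I)) z.re

/-- Partial derivative in the imaginary direction `y` of a function on `ℂ ≃ ℝ²`. -/
noncomputable def dZy (f : ℂ → ℂ) (z : ℂ) : ℂ :=
  deriv (fun t : ℝ => f (z.re + t * Complex.I)) z.im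

/-!
The holomorphic part of `G(·, -2k)` (the constant and the `qⁿ`-series) is killed by `∂/∂z̄`. On a
function of `y = Im z` alone, `∂/∂z̄` acts as `(i/2) ∂/∂y`, and `e^{-2πinz}` is holomorphic, so the
`n`-th non-holomorphic term contributes `(i/2) · ∂_y Γ(2k+1, 4πny) · e^{-2πinz}`, where
`∂_y Γ(2k+1, 4πny) = -(4πny)^{2k} e^{-4πny} · 4πn`. After conjugation,
`e^{-4πny} · conj(e^{-2πinz}) = qⁿ`, and the powers of `y` cancel against `y^{-2k}`. Termwise
differentiation is justified by `Γ(1 + m, x) ≪ e^{-3x/4}`, which beats the growth `e^{2πny}` of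
`q^{-n}` on every half-plane `Im z > c > 0`.
-/

open Complex ComplexConjugate Set Filter

section IncompleteGamma

lemma pow_mul_exp_neg_le (m : ℕ) {t : ℝ} (ht : 0 ≤ t) :
    t ^ m * Real.exp (-t) ≤ m.factorial * 4 ^ m * Real.exp (-(3 / 4) * t) := by
  have h := Real.pow_div_factorial_le_exp (t / 4) (by positivity) m
  rw [div_pow, div_div, div_le_iff₀ (by positivity)] at h
  calc t ^ m * Real.exp (-t) ≤ Real.exp (t / 4) * (4 ^ m * m.factorial) * Real.exp (-t) := by
        gcongr
    _ = m.factorial * 4 ^ m * Real.exp (-(3 / 4) * t) := by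
        rw [mul_right_comm, ← Real.exp_add]; ring_nf

lemma integrableOn_pow_mul_exp_neg_Ioi (m : ℕ) (a : ℝ) :
    IntegrableOn (fun t : ℝ => t ^ m * Real.exp (-t)) (Ioi a) := by
  refine integrable_of_isBigO_exp_neg (b := 3 / 4) (by norm_num) (by fun_prop) ?_
  refine Asymptotics.IsBigO.of_bound (m.factorial * 4 ^ m) ?_
  filter_upwards [eventually_ge_atTop 0] with t ht
  rw [Real.norm_of_nonneg (by positivity), Real.norm_of_nonneg (by positivity)]
  exact pow_mul_exp_neg_le m ht

lemma hasDerivAt_integral_Ioi {E : Type*} [NormedAddCommGroup E] [NormedSpace ℝ E]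
    [CompleteSpace E] {f : ℝ → E} (hf : Continuous f) (hint : ∀ a, IntegrableOn f (Ioi a))
    (x : ℝ) : HasDerivAt (fun u => ∫ t in Ioi u, f t) (-f x) x := by
  have htail : (fun u => ∫ t in Ioi u, f t)
      = fun u => (∫ t in Ioi 0, f t) - ∫ t in 0..u, f t := by
    funext u
    rw [← intervalIntegral.integral_Ioi_sub_Ioi' (hint 0) (hint u), sub_sub_cancel]
  rw [htail]
  exact (intervalIntegral.integral_hasDerivAt_right (hf.intervalIntegrable 0 x)
    hf.aestronglyMeasurable.stronglyMeasurableAtFilter hf.continuousAt).const_sub _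

lemma incGamma_one_add_natCast (m : ℕ) (x : ℝ) :
    incGamma (1 + m) x = ∫ t in Ioi x, t ^ m * Real.exp (-t) := by
  simp only [incGamma, add_sub_cancel_left, Real.rpow_natCast]

lemma hasDerivAt_incGamma (m : ℕ) (x : ℝ) :
    HasDerivAt (incGamma (1 + m)) (-(x ^ m * Real.exp (-x))) x := by
  simp_rw [funext (incGamma_one_add_natCast m)]
  exact hasDerivAt_integral_Ioi (by fun_prop) (integrableOn_pow_mul_exp_neg_Ioi m) x

lemma incGamma_nonneg (m : ℕ) {x : ℝ} (hx : 0 ≤ x) : 0 ≤ incGamma (1 + m) x := by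
  rw [incGamma_one_add_natCast]
  exact setIntegral_nonneg measurableSet_Ioi fun t ht => by
    have : 0 ≤ t := hx.trans (le_of_lt ht)
    positivity

lemma incGamma_le (m : ℕ) {x : ℝ} (hx : 0 ≤ x) :
    incGamma (1 + m) x ≤ m.factorial * 4 ^ m * (4 / 3 * Real.exp (-(3 / 4) * x)) := by
  have hexp : ∫ t in Ioi x, Real.exp (-(3 / 4) * t) = 4 / 3 * Real.exp (-(3 / 4) * x) := by
    rw [integral_exp_mul_Ioi (by norm_num)]; ring
  rw [incGamma_one_add_natCast, ← hexp, ← integral_const_mul]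
  refine setIntegral_mono_on (integrableOn_pow_mul_exp_neg_Ioi m x)
    ((exp_neg_integrableOn_Ioi x (by norm_num : (0 : ℝ) < 3 / 4)).const_mul _)
    measurableSet_Ioi fun t ht => ?_
  exact pow_mul_exp_neg_le m (hx.trans (le_of_lt ht))

lemma pow_mul_exp_neg_mul_exp_le (m : ℕ) {x : ℝ} (hx : 0 ≤ x) :
    (4 * x) ^ m * Real.exp (-(4 * x)) * Real.exp (2 * x)
      ≤ m.factorial * 4 ^ m * Real.exp (-x) := by
  calc (4 * x) ^ m * Real.exp (-(4 * x)) * Real.exp (2 * x)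
      ≤ m.factorial * 4 ^ m * Real.exp (-(3 / 4) * (4 * x)) * Real.exp (2 * x) :=
        mul_le_mul_of_nonneg_right (pow_mul_exp_neg_le m (by positivity)) (by positivity)
    _ = m.factorial * 4 ^ m * Real.exp (-x) := by rw [mul_assoc, ← Real.exp_add]; ring_nf

lemma incGamma_mul_exp_le (m : ℕ) {x : ℝ} (hx : 0 ≤ x) :
    incGamma (1 + m) (4 * x) * Real.exp (2 * x)
      ≤ m.factorial * 4 ^ m * (4 / 3 * Real.exp (-x)) := by
  calc incGamma (1 + m) (4 * x) * Real.exp (2 * x)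
      ≤ m.factorial * 4 ^ m * (4 / 3 * Real.exp (-(3 / 4) * (4 * x))) * Real.exp (2 * x) :=
        mul_le_mul_of_nonneg_right (incGamma_le m (by positivity)) (by positivity)
    _ = m.factorial * 4 ^ m * (4 / 3 * (Real.exp (-(3 / 4) * (4 * x)) * Real.exp (2 * x))) := by
        ring
    _ = m.factorial * 4 ^ m * (4 / 3 * Real.exp (-x)) := by rw [← Real.exp_add]; ring_nf

noncomputable def incGammaDeriv (m n : ℕ) (t : ℝ) : ℝ :=
  -((4 * π * n * t) ^ m * Real.exp (-(4 * π * n * t)) * (4 * π * n))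

lemma hasDerivAt_incGamma_mul (m n : ℕ) (t : ℝ) :
    HasDerivAt (fun s => incGamma (1 + m) (4 * π * n * s)) (incGammaDeriv m n t) t := by
  refine ((hasDerivAt_incGamma m _).comp t ((hasDerivAt_id t).const_mul (4 * π * n))).congr_deriv ?_
  simp [incGammaDeriv]

end IncompleteGamma

section Wirtinger

/-- `f` is real-differentiable at `z` with `2 ∂f/∂z̄ (z) = w`. -/
def HasWirtingerAt (f : ℂ → ℂ) (w z : ℂ) : Prop :=
  ∃ L : ℂ →L[ℝ] ℂ, HasFDerivAt f L z ∧ L 1 + I * L I = w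

variable {f g : ℂ → ℂ} {v w z : ℂ}

lemma HasWirtingerAt.dZx_add_I_mul_dZy (h : HasWirtingerAt f w z) :
    dZx f z + I * dZy f z = w := by
  obtain ⟨L, hL, rfl⟩ := h
  have hx : HasDerivAt (fun t : ℝ => (t : ℂ) + z.im * I) 1 z.re :=
    (hasDerivAt_id _).comp_ofReal.add_const _
  have hy : HasDerivAt (fun t : ℝ => (z.re : ℂ) + t * I) I z.im := by
    simpa using ((hasDerivAt_id _).comp_ofReal.mul_const I).const_add (z.re : ℂ)
  have hLx : HasDerivAt (fun t : ℝ => f (t + z.im * I)) (L 1) z.re :=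
    hL.comp_hasDerivAt_of_eq z.re hx (re_add_im z).symm
  have hLy : HasDerivAt (fun t : ℝ => f (z.re + t * I)) (L I) z.im :=
    hL.comp_hasDerivAt_of_eq z.im hy (re_add_im z).symm
  rw [dZx, dZy, hLx.deriv, hLy.deriv]

lemma HasWirtingerAt.add (hf : HasWirtingerAt f v z) (hg : HasWirtingerAt g w z) :
    HasWirtingerAt (fun x => f x + g x) (v + w) z := by
  obtain ⟨L, hL, rfl⟩ := hf
  obtain ⟨M, hM, rfl⟩ := hg
  exact ⟨L + M, hL.add hM, by
    change L 1 + M 1 + I * (L I + M I) = _; ring⟩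

lemma HasWirtingerAt.const_add (c : ℂ) (hf : HasWirtingerAt f w z) :
    HasWirtingerAt (fun x => c + f x) w z := by
  obtain ⟨L, hL, rfl⟩ := hf
  exact ⟨L, hL.const_add c, rfl⟩

lemma HasWirtingerAt.const_mul (c : ℂ) (hf : HasWirtingerAt f w z) :
    HasWirtingerAt (fun x => c * f x) (c * w) z := by
  obtain ⟨L, hL, rfl⟩ := hf
  exact ⟨c • L, hL.const_mul c, by
    change c * L 1 + I * (c * L I) = _; ring⟩

lemma DifferentiableAt.hasWirtingerAt_zero (hf : DifferentiableAt ℂ f z) :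
    HasWirtingerAt f 0 z := by
  refine ⟨(fderiv ℂ f z).restrictScalars ℝ, hf.hasFDerivAt.restrictScalars ℝ, ?_⟩
  have h : fderiv ℂ f z I = I * fderiv ℂ f z 1 := by
    rw [← smul_eq_mul, ← map_smul, smul_eq_mul, mul_one]
  simp only [ContinuousLinearMap.coe_restrictScalars', h]
  linear_combination fderiv ℂ f z 1 * I_sq

lemma HasDerivAt.hasWirtingerAt_comp_im {g : ℝ → ℂ} {g' : ℂ} (hg : HasDerivAt g g' z.im) :
    HasWirtingerAt (fun x => g x.im) (I * g') z := by
  refine ⟨_, hg.hasFDerivAt.comp z imCLM.hasFDerivAt, ?_⟩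
  simp

lemma hasWirtingerAt_tsum {ι : Type*} {f : ι → ℂ → ℂ} {f' : ι → ℂ → ℂ →L[ℝ] ℂ} {u : ι → ℝ}
    {U : Set ℂ} (hu : Summable u) (hU : IsOpen U) (hU' : IsPreconnected U)
    (hf : ∀ n x, x ∈ U → HasFDerivAt (f n) (f' n x) x) (hf' : ∀ n x, x ∈ U → ‖f' n x‖ ≤ u n)
    (hz : z ∈ U) (hf0 : Summable fun n => f n z) :
    HasWirtingerAt (fun x => ∑' n, f n x) (∑' n, (f' n z 1 + I * f' n z I)) z := by
  refine ⟨_, hasFDerivAt_tsum_of_isPreconnected hu hU hU' hf hf' hz hf0 hz, ?_⟩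
  have hs : Summable fun n => f' n z := .of_norm_bounded hu fun n => hf' n z hz
  have happly (v : ℂ) : (∑' n, f' n z) v = ∑' n, f' n z v :=
    (ContinuousLinearMap.apply ℝ ℂ v).map_tsum hs
  have hsv (v : ℂ) : Summable fun n => f' n z v := (ContinuousLinearMap.apply ℝ ℂ v).summable hs
  rw [happly, happly, ← tsum_mul_left, ← Summable.tsum_add (hsv 1) ((hsv I).mul_left I)]

end Wirtinger

section QSeries

open ContinuousLinearMap

lemma summable_pnat_pow_mul_exp_neg (q : ℕ) {r : ℝ} (hr : 0 < r) :
    Summable fun n : ℕ+ => ((n : ℕ) : ℝ) ^ q * Real.exp (-r * (n : ℕ)) :=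
  (Real.summable_pow_mul_exp_neg_nat_mul q hr).comp_injective PNat.coe_injective

lemma norm_cexp_two_pi_I_mul (n : ℕ) (w : ℂ) :
    ‖cexp (2 * π * I * n * w)‖ = Real.exp (-(2 * π * n * w.im)) := by
  rw [norm_exp]; congr 1; simp

lemma norm_cexp_neg_two_pi_I_mul (n : ℕ) (w : ℂ) :
    ‖cexp (-(2 * π * I * n * w))‖ = Real.exp (2 * π * n * w.im) := by
  rw [norm_exp]; congr 1; simp

variable {a : ℕ+ → ℂ} {p : ℕ} {z : ℂ}

lemma differentiableAt_tsum_mul_cexp (ha : ∀ n, ‖a n‖ ≤ ((n : ℕ) : ℝ) ^ p) (hz : 0 < z.im) :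
    DifferentiableAt ℂ (fun w => ∑' n : ℕ+, a n * cexp (2 * π * I * (n : ℕ) * w)) z := by
  have hU : IsOpen {w : ℂ | z.im / 2 < w.im} := isOpen_lt continuous_const continuous_im
  refine (differentiableOn_tsum_of_summable_norm
    (summable_pnat_pow_mul_exp_neg p (r := π * z.im) (by positivity)) (fun n => by fun_prop) hU
    fun n w (hw : z.im / 2 < w.im) => ?_).differentiableAt (hU.mem_nhds (by simp; linarith))
  rw [norm_mul, norm_cexp_two_pi_I_mul]
  refine mul_le_mul (ha n) (Real.exp_le_exp.2 ?_) (by positivity) (by positivity)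
  have : 0 ≤ π * ((n : ℕ) : ℝ) := by positivity
  nlinarith

noncomputable def incGammaTermDeriv (m n : ℕ) (w : ℂ) : ℂ →L[ℝ] ℂ :=
  (incGamma (1 + m) (4 * π * n * w.im) : ℂ) •
      (smulRight (1 : ℂ →L[ℂ] ℂ)
        (-(2 * π * I * n) * cexp (-(2 * π * I * n * w)))).restrictScalars ℝ
    + cexp (-(2 * π * I * n * w)) • imCLM.smulRight (incGammaDeriv m n w.im : ℂ)

lemma hasFDerivAt_incGamma_term (c : ℂ) (m n : ℕ) (w : ℂ) :
    HasFDerivAt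
      (fun x => c * (incGamma (1 + m) (4 * π * n * x.im) : ℂ) * cexp (-(2 * π * I * n * x)))
      (c • incGammaTermDeriv m n w) w := by
  have hΓ : HasFDerivAt (fun x : ℂ => (incGamma (1 + m) (4 * π * n * x.im) : ℂ))
      (imCLM.smulRight (incGammaDeriv m n w.im : ℂ)) w :=
    ((hasDerivAt_incGamma_mul m n w.im).ofReal_comp.hasFDerivAt.comp w
      imCLM.hasFDerivAt).congr_fderiv (ext fun _ => rfl)
  have he : HasDerivAt (fun x : ℂ => cexp (-(2 * π * I * n * x)))
      (-(2 * π * I * n) * cexp (-(2 * π * I * n * w))) w := by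
    refine ((hasDerivAt_id w).const_mul (2 * π * I * n)).fun_neg.cexp.congr_deriv ?_
    simp only [id, mul_one]; ring
  exact ((hΓ.mul (he.hasFDerivAt.restrictScalars ℝ)).const_mul c).congr_of_eventuallyEq
    (.of_forall fun x => mul_assoc _ _ _)

lemma incGammaTermDeriv_one_add_I_mul (m n : ℕ) (w : ℂ) :
    incGammaTermDeriv m n w 1 + I * incGammaTermDeriv m n w I
      = I * incGammaDeriv m n w.im * cexp (-(2 * π * I * n * w)) := by
  set e := cexp (-(2 * π * I * n * w))
  set Γ : ℂ := (incGamma (1 + m) (4 * π * n * w.im) : ℂ)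
  have h1 : incGammaTermDeriv m n w 1 = Γ * (-(2 * π * I * n) * e) := by
    simp [incGammaTermDeriv, Γ, e]
  have hI : incGammaTermDeriv m n w I
      = Γ * (I * (-(2 * π * I * n) * e)) + e * incGammaDeriv m n w.im := by
    simp [incGammaTermDeriv, Γ, e]
  rw [h1, hI]
  linear_combination Γ * (-(2 * π * I * n) * e) * I_sq

lemma norm_incGammaTermDeriv_le (m n : ℕ) {w : ℂ} (hw : 0 ≤ w.im) :
    ‖incGammaTermDeriv m n w‖
      ≤ 8 * π * (m.factorial * 4 ^ m) * n * Real.exp (-(π * n * w.im)) := by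
  set x := π * n * w.im
  have hx : 0 ≤ x := by positivity
  have h4 : 4 * π * n * w.im = 4 * x := by ring
  have h2 : 2 * π * n * w.im = 2 * x := by ring
  have hΓ := incGamma_mul_exp_le m hx
  have hp := pow_mul_exp_neg_mul_exp_le m hx
  have hK : 0 ≤ π * n * (m.factorial * 4 ^ m * Real.exp (-x)) := by positivity
  calc ‖incGammaTermDeriv m n w‖
      ≤ incGamma (1 + m) (4 * x) * (2 * π * n * Real.exp (2 * x))
        + Real.exp (2 * x) * ((4 * x) ^ m * Real.exp (-(4 * x)) * (4 * π * n)) := by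
        refine (norm_add_le _ _).trans ?_
        have hc : ‖(2 * π * I * n : ℂ)‖ = 2 * π * n := by simp [Real.pi_pos.le]
        rw [norm_smul, norm_smul, norm_restrictScalars, norm_smulRight_apply,
          norm_smulRight_apply, imCLM_norm, norm_one, norm_mul, norm_neg, hc,
          norm_cexp_neg_two_pi_I_mul, norm_real, norm_real, incGammaDeriv, norm_neg, h4, h2,
          Real.norm_of_nonneg (incGamma_nonneg m (by positivity)),
          Real.norm_of_nonneg (by positivity), one_mul, one_mul]
    _ = 2 * π * n * (incGamma (1 + m) (4 * x) * Real.exp (2 * x))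
        + 4 * π * n * ((4 * x) ^ m * Real.exp (-(4 * x)) * Real.exp (2 * x)) := by ring
    _ ≤ 2 * π * n * (m.factorial * 4 ^ m * (4 / 3 * Real.exp (-x)))
        + 4 * π * n * (m.factorial * 4 ^ m * Real.exp (-x)) := by gcongr
    _ ≤ 8 * π * (m.factorial * 4 ^ m) * n * Real.exp (-x) := by nlinarith

lemma hasWirtingerAt_tsum_incGamma (ha : ∀ n, ‖a n‖ ≤ ((n : ℕ) : ℝ) ^ p) (m : ℕ)
    (hz : 0 < z.im) :
    HasWirtingerAt
      (fun w => ∑' n : ℕ+, a n * (incGamma (1 + m) (4 * π * (n : ℕ) * w.im) : ℂ) *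
        cexp (-(2 * π * I * (n : ℕ) * w)))
      (I * ∑' n : ℕ+, a n * incGammaDeriv m n z.im * cexp (-(2 * π * I * (n : ℕ) * z))) z := by
  set K : ℝ := m.factorial * 4 ^ m
  have hU : IsOpen {w : ℂ | z.im / 2 < w.im} := isOpen_lt continuous_const continuous_im
  have hU' : IsPreconnected {w : ℂ | z.im / 2 < w.im} :=
    ((convex_Ioi _).linear_preimage imLm).isPreconnected
  have hderiv_le (n : ℕ+) (w : ℂ) (hw : z.im / 2 < w.im) :
      ‖a n • incGammaTermDeriv m n w‖
        ≤ 8 * π * K * (((n : ℕ) : ℝ) ^ (p + 1) * Real.exp (-(π * z.im / 2) * (n : ℕ))) := by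
    have hexp : Real.exp (-(π * (n : ℕ) * w.im)) ≤ Real.exp (-(π * z.im / 2) * (n : ℕ)) := by
      have : 0 ≤ π * ((n : ℕ) : ℝ) := by positivity
      gcongr
      nlinarith
    calc ‖a n • incGammaTermDeriv m n w‖
        ≤ ((n : ℕ) : ℝ) ^ p * (8 * π * K * (n : ℕ) * Real.exp (-(π * (n : ℕ) * w.im))) := by
          rw [norm_smul]
          exact mul_le_mul (ha n) (norm_incGammaTermDeriv_le m n (by linarith)) (norm_nonneg _)
            (by positivity)
      _ ≤ ((n : ℕ) : ℝ) ^ p * (8 * π * K * (n : ℕ) * Real.exp (-(π * z.im / 2) * (n : ℕ))) := by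
          gcongr
      _ = _ := by ring
  have hterm_le (n : ℕ+) :
      ‖a n * (incGamma (1 + m) (4 * π * (n : ℕ) * z.im) : ℂ) *
          cexp (-(2 * π * I * (n : ℕ) * z))‖
        ≤ K * (4 / 3) * (((n : ℕ) : ℝ) ^ p * Real.exp (-(π * z.im) * (n : ℕ))) := by
    set x := π * (n : ℕ) * z.im
    have hx : 0 ≤ x := by positivity
    rw [norm_mul, norm_mul, norm_real, Real.norm_of_nonneg (incGamma_nonneg m (by positivity)),
      norm_cexp_neg_two_pi_I_mul, show 4 * π * (n : ℕ) * z.im = 4 * x by ring,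
      show 2 * π * (n : ℕ) * z.im = 2 * x by ring, mul_assoc]
    calc ‖a n‖ * (incGamma (1 + m) (4 * x) * Real.exp (2 * x))
        ≤ ((n : ℕ) : ℝ) ^ p * (K * (4 / 3 * Real.exp (-x))) :=
          mul_le_mul (ha n) (incGamma_mul_exp_le m hx)
            (mul_nonneg (incGamma_nonneg m (by positivity)) (Real.exp_nonneg _)) (by positivity)
      _ = _ := by simp only [x]; ring_nf
  convert hasWirtingerAt_tsum
    ((summable_pnat_pow_mul_exp_neg (p + 1) (by positivity)).mul_left (8 * π * K))
    hU hU' (fun n w _ => hasFDerivAt_incGamma_term (a n) m n w) hderiv_le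
    (show z.im / 2 < z.im by linarith)
    (.of_norm_bounded ((summable_pnat_pow_mul_exp_neg p (by positivity)).mul_left (K * (4 / 3)))
      hterm_le) using 1
  rw [← tsum_mul_left]
  refine tsum_congr fun n => ?_
  change _ = a n * incGammaTermDeriv m n z 1 + I * (a n * incGammaTermDeriv m n z I)
  linear_combination (-a n) * incGammaTermDeriv_one_add_I_mul m n z

end QSeries

section Eisenstein

lemma sigma'_le_pow_succ (q n : ℕ) : sigma' q n ≤ n ^ (q + 1) :=
  calc sigma' q n ≤ n.divisors.card • n ^ q :=
        Finset.sum_le_card_nsmul _ _ _ fun d hd => Nat.pow_le_pow_left (Nat.divisor_le hd) q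
    _ ≤ n * n ^ q := Nat.mul_le_mul_right _ (Nat.card_divisors_le_self n)
    _ = n ^ (q + 1) := by ring

lemma norm_sigma'_div_pow_le (q : ℕ) (n : ℕ+) :
    ‖(sigma' q n : ℂ) / ((n : ℕ) : ℂ) ^ q‖ ≤ ((n : ℕ) : ℝ) ^ 1 := by
  have hn : (0 : ℝ) < (n : ℕ) := by exact_mod_cast n.pos
  rw [norm_div, norm_pow, norm_natCast, norm_natCast, div_le_iff₀ (by positivity), ← pow_add,
    add_comm]
  exact_mod_cast sigma'_le_pow_succ q n

lemma conj_cexp_neg_two_pi_I_mul (n : ℕ) (w : ℂ) :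
    conj (cexp (-(2 * π * I * n * w)))
      = Real.exp (4 * π * n * w.im) * cexp (2 * π * I * n * w) := by
  rw [← exp_conj, ofReal_exp, ← Complex.exp_add]
  congr 1
  exact Complex.ext (by simp; ring) (by simp)

lemma conj_tsum_incGammaDeriv (m : ℕ) (c : ℕ+ → ℕ) (z : ℂ) :
    conj (∑' n : ℕ+, (c n : ℂ) / ((n : ℕ) : ℂ) ^ (m + 1) * incGammaDeriv m n z.im *
        cexp (-(2 * π * I * (n : ℕ) * z)))
      = -((4 * π) ^ (m + 1) * z.im ^ m) *
          ∑' n : ℕ+, (c n : ℂ) * cexp (2 * π * I * (n : ℕ) * z) := by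
  rw [conj_tsum, ← tsum_mul_left]
  refine tsum_congr fun n => ?_
  have hn : ((n : ℕ) : ℂ) ≠ 0 := Nat.cast_ne_zero.2 n.ne_zero
  rw [map_mul, map_mul, conj_cexp_neg_two_pi_I_mul, conj_ofReal, map_div₀, map_pow, map_natCast,
    map_natCast, incGammaDeriv]
  push_cast
  rw [Complex.exp_neg]
  field_simp
  ring

lemma hasWirtingerAt_G (k : ℕ) {z : ℂ} (hz : 0 < z.im) :
    HasWirtingerAt (G k)
      (I * ((-1 : ℂ) ^ (k + 1) * 2 ^ (1 + 2 * k) * π * riemannZeta (-2 * k - 1) * z.im ^ (2 * k)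
        + (-1 : ℂ) ^ k / (2 * π) ^ (2 * k) *
          ∑' n : ℕ+, (sigma' (2 * k + 1) n : ℂ) / ((n : ℕ) : ℂ) ^ (2 * k + 1) *
            incGammaDeriv (2 * k) n z.im * cexp (-(2 * π * I * (n : ℕ) * z)))) z := by
  have hy : HasDerivAt (fun t : ℝ => (-1 : ℂ) ^ (k + 1) * (t : ℂ) ^ (1 + 2 * k) *
        2 ^ (1 + 2 * k) * π * riemannZeta (-2 * k - 1) / (2 * k + 1))
      ((-1 : ℂ) ^ (k + 1) * 2 ^ (1 + 2 * k) * π * riemannZeta (-2 * k - 1) * z.im ^ (2 * k))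
      z.im := by
    have hk : (2 * k + 1 : ℂ) ≠ 0 := by exact_mod_cast (2 * k).succ_ne_zero
    refine (((((hasDerivAt_pow (1 + 2 * k) (z.im : ℂ)).comp_ofReal.const_mul _).mul_const
      _).mul_const _).mul_const _).div_const _ |>.congr_deriv ?_
    rw [show 1 + 2 * k - 1 = 2 * k by omega]
    field_simp
    push_cast
    ring
  have hq := (differentiableAt_tsum_mul_cexp (norm_sigma'_div_pow_le (2 * k + 1)) hz)
  have hΓ := hasWirtingerAt_tsum_incGamma (norm_sigma'_div_pow_le (2 * k + 1)) (2 * k) hz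
  simp only [Nat.cast_mul, Nat.cast_ofNat] at hΓ
  convert ((hy.hasWirtingerAt_comp_im.const_add
    (((2 * k).factorial * riemannZeta (2 * (k : ℂ) + 1)) / (2 * π) ^ (2 * k))).add
    (hq.hasWirtingerAt_zero.const_mul ((-1 : ℂ) ^ k / (2 * π) ^ (2 * k) * (2 * k).factorial))).add
    (hΓ.const_mul ((-1 : ℂ) ^ k / (2 * π) ^ (2 * k))) using 1
  · rfl
  · ring

end Eisenstein

theorem xi_G_eq_eisenstein_general (k : ℕ) (z : ℂ) (hz : 0 < z.im) :
    2 * Complex.I * ((z.im ^ (-(2 * k : ℤ)) : ℝ) : ℂ) *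
      (starRingEnd ℂ) ((1 / 2) * (dZx (G k) z + Complex.I * dZy (G k) z))
      = (-1 : ℂ) ^ (k + 1) * 2 ^ (2 * k + 2) * (Real.pi : ℂ) *
        ((1 / 2) * riemannZeta (-2 * (k : ℂ) - 1) +
          ∑' n : ℕ+, ((sigma' (2 * k + 1) n : ℂ)) *
            Complex.exp (2 * Real.pi * Complex.I * ((n : ℕ) : ℂ) * z)) := by
  rw [(hasWirtingerAt_G k hz).dZx_add_I_mul_dZy]
  have hζ : conj (riemannZeta (-2 * k - 1)) = riemannZeta (-2 * k - 1) := by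
    rw [← riemannZeta_conj]
    exact congrArg _ (Complex.ext (by simp) (by simp))
  simp only [map_mul, map_add, map_div₀, map_pow, map_neg, map_one, map_ofNat, conj_ofReal,
    conj_I, conj_tsum_incGammaDeriv, hζ]
  have hy : ((z.im ^ (-(2 * k : ℤ)) : ℝ) : ℂ) * (z.im : ℂ) ^ (2 * k) = 1 := by
    rw [← ofReal_pow, ← ofReal_mul, ← zpow_natCast, Nat.cast_mul, Nat.cast_ofNat,
      ← zpow_add₀ hz.ne', neg_add_cancel, zpow_zero, ofReal_one]
  have hI : 2 * I * (1 / 2 * -I) = 1 := by linear_combination -I_sq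
  have hc : (-1 : ℂ) ^ k / (2 * π) ^ (2 * k) * (4 * π) ^ (2 * k + 1)
      = (-1) ^ k * 2 ^ (2 * k + 2) * π := by
    rw [show (4 * π : ℂ) ^ (2 * k + 1) = (2 * π) ^ (2 * k) * (2 ^ (2 * k + 2) * π) by
      rw [show (4 * π : ℂ) = 2 * (2 * π) by ring, mul_pow]; ring]
    field_simp
  set S := ∑' n : ℕ+, (sigma' (2 * k + 1) n : ℂ) * cexp (2 * π * I * (n : ℕ) * z)
  set B := (-1 : ℂ) ^ (k + 1) * 2 ^ (1 + 2 * k) * π * riemannZeta (-2 * k - 1)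
    - (-1 : ℂ) ^ k / (2 * π) ^ (2 * k) * (4 * π) ^ (2 * k + 1) * S
  linear_combination (((z.im ^ (-(2 * k : ℤ)) : ℝ) : ℂ) * (z.im : ℂ) ^ (2 * k) * B) * hI
    + B * hy - S * hc

/-- the image of `G(z, -2k)` under the weight `-2k` ξ-operator
`ξ_w(f) = 2i y^w conj(∂f/∂z̄)`, with `∂/∂z̄ = (1/2)(∂/∂x + i ∂/∂y)`, equals
`(-1)^(k+1) 2^(2k+2) π` times the classical Eisenstein series `G_{2k+2}(z)`. -/
theorem xi_G_eq_eisenstein (k : ℕ) (hk : 1 ≤ k) (z : ℂ) (hz : 0 < z.im) :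
    2 * Complex.I * ((z.im ^ (-(2 * k : ℤ)) : ℝ) : ℂ) *
      (starRingEnd ℂ) ((1 / 2) * (dZx (G k) z + Complex.I * dZy (G k) z))
      = (-1 : ℂ) ^ (k + 1) * 2 ^ (2 * k + 2) * (Real.pi : ℂ) *
        ((1 / 2) * riemannZeta (-2 * (k : ℂ) - 1) +
          ∑' n : ℕ+, ((sigma' (2 * k + 1) n : ℂ)) *
            Complex.exp (2 * Real.pi * Complex.I * ((n : ℕ) : ℂ) * z)) :=
  xi_G_eq_eisenstein_general k z hz
end

section
/- Let k be a positive integer, let s be a real number with s > k + 1, and let z = x+iy be in the upper half-plane ℍ. Then Σ_{n∈ℤ} (z+n)^{2k}·|z+n|^{−2s} = y^{1+2k−2s} · Σ_{n∈ℤ} ( ∫_{−∞}^{∞} (t+i)^{2k}·(t²+1)^{−s}·e^{−2πinyt} dt ) · e^{2πinx}, where both series converge absolutely. -/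
/-!
Write the summand `t ↦ (t + iy)^(2k) |t + iy|^(-2s)` as `p(t) (t² + y²)^r` with `p` a polynomial
and `r = -s`. Functions of this shape are closed under differentiation (the degree of `p` goes up
by one, `r` goes down by one), and each is bounded by a multiple of `(1 + |t|)^(deg p + 2r)`. Hence
the summand decays like `|t|^(2k - 2s)` and its first two derivatives are integrable, so its
Fourier transform is `O(n⁻²)` on the integers and Poisson summation applies. The substitution
`t ↦ y t` turns the Fourier transform at `n` into `y^(1 + 2k - 2s)` times the integral in the
statement.
-/

open scoped Real FourierTransform
open MeasureTheory Polynomial Complex Filter Asymptotics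

section FourierDecay

variable {E : Type*} [NormedAddCommGroup E] [NormedSpace ℂ E] {f : ℝ → E}

theorem norm_fourier_le_of_deriv_deriv (hf : Integrable f) (hf' : Differentiable ℝ f)
    (hdf : Integrable (deriv f)) (hdf' : Differentiable ℝ (deriv f))
    (hddf : Integrable (deriv (deriv f))) (w : ℝ) :
    (2 * π * |w|) ^ 2 * ‖𝓕 f w‖ ≤ ∫ t, ‖deriv (deriv f) t‖ := by
  have h : 𝓕 (deriv (deriv f)) w = (2 * π * I * w) • (2 * π * I * w) • 𝓕 f w := by
    rw [Real.fourier_deriv hdf hdf' hddf, Real.fourier_deriv hf hf' hdf]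
  calc (2 * π * |w|) ^ 2 * ‖𝓕 f w‖ = ‖𝓕 (deriv (deriv f)) w‖ := by
        rw [h, norm_smul, norm_smul, ← mul_assoc, ← sq]
        simp [abs_of_pos Real.pi_pos]
    _ ≤ ∫ t, ‖deriv (deriv f) t‖ :=
      VectorFourier.norm_fourierIntegral_le_integral_norm _ _ _ _ _

theorem summable_fourier_intCast_of_deriv_deriv [CompleteSpace E]
    (hf : Integrable f) (hf' : Differentiable ℝ f)
    (hdf : Integrable (deriv f)) (hdf' : Differentiable ℝ (deriv f))
    (hddf : Integrable (deriv (deriv f))) : Summable fun n : ℤ => 𝓕 f n := by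
  refine summable_of_isBigO (Real.summable_abs_int_rpow one_lt_two)
    (IsBigO.of_bound ((∫ t, ‖deriv (deriv f) t‖) / (2 * π) ^ 2) ?_)
  filter_upwards [eventually_cofinite_ne 0] with n hn
  have hn' : 0 < |(n : ℝ)| := by positivity
  have := norm_fourier_le_of_deriv_deriv hf hf' hdf hdf' hddf n
  rw [Real.norm_eq_abs, abs_of_nonneg (by positivity), Real.rpow_neg hn'.le, Real.rpow_two,
    ← div_eq_mul_inv, div_div, ← mul_pow, le_div_iff₀ (by positivity), mul_comm]
  exact this

end FourierDecay

noncomputable def polyMulRpow (y : ℝ) (p : ℂ[X]) (r : ℝ) (t : ℝ) : ℂ :=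
  p.eval (t : ℂ) * ((t ^ 2 + y ^ 2) ^ r : ℝ)

noncomputable def polyMulRpowDerivPoly (y : ℝ) (p : ℂ[X]) (r : ℝ) : ℂ[X] :=
  derivative p * (X ^ 2 + C ((y : ℂ) ^ 2)) + C (2 * r : ℂ) * X * p

section PolyMulRpow

variable {y : ℝ} (p : ℂ[X]) (r : ℝ)

theorem hasDerivAt_polyMulRpow (hy : y ≠ 0) (t : ℝ) :
    HasDerivAt (polyMulRpow y p r) (polyMulRpow y (polyMulRpowDerivPoly y p r) (r - 1) t) t := by
  have hpos : 0 < t ^ 2 + y ^ 2 := by positivity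
  have hp : HasDerivAt (fun u : ℝ => p.eval (u : ℂ)) ((derivative p).eval (t : ℂ)) t :=
    (p.hasDerivAt (t : ℂ)).comp_ofReal
  have hq : HasDerivAt (fun u : ℝ => u ^ 2 + y ^ 2) (2 * t) t := by
    simpa using (hasDerivAt_pow 2 t).add_const (y ^ 2)
  have hqr := ((Real.hasDerivAt_rpow_const (p := r) (Or.inl hpos.ne')).comp t hq).ofReal_comp
  have hsplit : (t ^ 2 + y ^ 2) ^ r = (t ^ 2 + y ^ 2) ^ (r - 1) * (t ^ 2 + y ^ 2) := by
    rw [← Real.rpow_add_one hpos.ne', sub_add_cancel]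
  refine (hp.mul hqr).congr_deriv ?_
  simp only [polyMulRpow, polyMulRpowDerivPoly, eval_add, eval_mul, eval_pow, eval_X, eval_C,
    Function.comp_apply, hsplit]
  push_cast
  ring

theorem deriv_polyMulRpow (hy : y ≠ 0) :
    deriv (polyMulRpow y p r) = polyMulRpow y (polyMulRpowDerivPoly y p r) (r - 1) :=
  funext fun t => (hasDerivAt_polyMulRpow p r hy t).deriv

theorem differentiable_polyMulRpow (hy : y ≠ 0) : Differentiable ℝ (polyMulRpow y p r) :=
  fun t => (hasDerivAt_polyMulRpow p r hy t).differentiableAt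

theorem natDegree_polyMulRpowDerivPoly_le (y : ℝ) :
    (polyMulRpowDerivPoly y p r).natDegree ≤ p.natDegree + 1 := by
  have hq : (X ^ 2 + C ((y : ℂ) ^ 2)).natDegree ≤ 2 := by
    refine (natDegree_add_le _ _).trans (max_le ?_ ?_) <;> simp
  refine (natDegree_add_le _ _).trans (max_le ?_ ?_)
  · rcases Nat.eq_zero_or_pos p.natDegree with h0 | hpos
    · simp [derivative_of_natDegree_zero h0]
    · refine natDegree_mul_le.trans ?_
      have := natDegree_derivative_le p
      omega
  · refine natDegree_mul_le.trans ?_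
    have : (C (2 * r : ℂ) * X).natDegree ≤ 1 := (natDegree_C_mul_le _ _).trans natDegree_X_le
    omega

theorem norm_eval_ofReal_le (t : ℝ) :
    ‖p.eval (t : ℂ)‖ ≤
      (∑ i ∈ Finset.range (p.natDegree + 1), ‖p.coeff i‖) * (1 + |t|) ^ p.natDegree := by
  rw [eval_eq_sum_range, Finset.sum_mul]
  refine (norm_sum_le _ _).trans (Finset.sum_le_sum fun i hi => ?_)
  rw [norm_mul, norm_pow, Complex.norm_real, Real.norm_eq_abs]
  gcongr
  calc |t| ^ i ≤ (1 + |t|) ^ i := by gcongr; linarith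
    _ ≤ (1 + |t|) ^ p.natDegree :=
      pow_le_pow_right₀ (by linarith [abs_nonneg t]) (Nat.lt_succ_iff.mp (Finset.mem_range.mp hi))

variable {r} in
theorem exists_rpow_sq_add_sq_le (hy : y ≠ 0) (hr : r ≤ 0) :
    ∃ c, 0 ≤ c ∧ ∀ t : ℝ, (t ^ 2 + y ^ 2) ^ r ≤ c * (1 + |t|) ^ (2 * r) := by
  set m := min 1 (y ^ 2) / 2 with hm_def
  have hm : 0 < m := by positivity
  refine ⟨m ^ r, by positivity, fun t => ?_⟩
  have hle : m * (1 + |t|) ^ 2 ≤ t ^ 2 + y ^ 2 := by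
    have h1 : (1 + |t|) ^ 2 ≤ 2 * (1 + t ^ 2) := by nlinarith [sq_abs t, sq_nonneg (1 - |t|)]
    have h2 : min 1 (y ^ 2) * (1 + t ^ 2) ≤ t ^ 2 + y ^ 2 := by
      nlinarith [min_le_left 1 (y ^ 2), min_le_right 1 (y ^ 2), sq_nonneg t]
    calc m * (1 + |t|) ^ 2 ≤ m * (2 * (1 + t ^ 2)) := by gcongr
      _ = min 1 (y ^ 2) * (1 + t ^ 2) := by rw [hm_def]; ring
      _ ≤ t ^ 2 + y ^ 2 := h2
  calc (t ^ 2 + y ^ 2) ^ r ≤ (m * (1 + |t|) ^ 2) ^ r :=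
      Real.rpow_le_rpow_of_nonpos (by positivity) hle hr
    _ = m ^ r * (1 + |t|) ^ (2 * r) := by
      rw [Real.mul_rpow hm.le (by positivity), Real.rpow_mul (by positivity)]
      norm_cast

theorem exists_norm_polyMulRpow_le (hy : y ≠ 0) (hr : r ≤ 0) :
    ∃ C, 0 ≤ C ∧
      ∀ t, ‖polyMulRpow y p r t‖ ≤ C * (1 + |t|) ^ ((p.natDegree : ℝ) + 2 * r) := by
  obtain ⟨c, hc0, hc⟩ := exists_rpow_sq_add_sq_le hy hr
  set A := ∑ i ∈ Finset.range (p.natDegree + 1), ‖p.coeff i‖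
  refine ⟨A * c, by positivity, fun t => ?_⟩
  have ht : 0 < 1 + |t| := by positivity
  rw [polyMulRpow, norm_mul, Complex.norm_real, Real.norm_of_nonneg (by positivity),
    Real.rpow_add ht, Real.rpow_natCast]
  calc _ ≤ (A * (1 + |t|) ^ p.natDegree) * (c * (1 + |t|) ^ (2 * r)) :=
      mul_le_mul (norm_eval_ofReal_le p t) (hc t) (by positivity) (by positivity)
    _ = _ := by ring

theorem integrable_polyMulRpow (hy : y ≠ 0) (hd : (p.natDegree : ℝ) + 2 * r < -1) :
    Integrable (polyMulRpow y p r) := by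
  have hr : r ≤ 0 := by linarith [(p.natDegree.cast_nonneg : (0 : ℝ) ≤ p.natDegree)]
  obtain ⟨C, -, hC⟩ := exists_norm_polyMulRpow_le p r hy hr
  have hint : Integrable fun t : ℝ => (1 + ‖t‖) ^ (-(-((p.natDegree : ℝ) + 2 * r))) :=
    integrable_one_add_norm (by rw [Module.finrank_self, Nat.cast_one]; linarith)
  refine (hint.const_mul C).mono'
    (differentiable_polyMulRpow p r hy).continuous.aestronglyMeasurable (ae_of_all _ fun t => ?_)
  simpa [Real.norm_eq_abs] using hC t

theorem isBigO_polyMulRpow_cocompact (hy : y ≠ 0) (he : (p.natDegree : ℝ) + 2 * r ≤ 0) :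
    polyMulRpow y p r =O[cocompact ℝ] fun t => |t| ^ ((p.natDegree : ℝ) + 2 * r) := by
  have hr : r ≤ 0 := by linarith [(p.natDegree.cast_nonneg : (0 : ℝ) ≤ p.natDegree)]
  obtain ⟨C, hC0, hC⟩ := exists_norm_polyMulRpow_le p r hy hr
  refine IsBigO.of_bound C ?_
  filter_upwards [(isCompact_singleton (x := (0 : ℝ))).compl_mem_cocompact] with t ht
  rw [Real.norm_of_nonneg (by positivity)]
  refine (hC t).trans (mul_le_mul_of_nonneg_left ?_ hC0)
  exact Real.rpow_le_rpow_of_nonpos (abs_pos.2 ht) (by linarith) he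

theorem summable_fourier_polyMulRpow (hy : y ≠ 0) (hd : (p.natDegree : ℝ) + 2 * r < -1) :
    Summable fun n : ℤ => 𝓕 (polyMulRpow y p r) n := by
  set p₁ := polyMulRpowDerivPoly y p r
  have hd₁ : (p₁.natDegree : ℝ) ≤ p.natDegree + 1 := by
    exact_mod_cast natDegree_polyMulRpowDerivPoly_le p r y
  have hd₂ : ((polyMulRpowDerivPoly y p₁ (r - 1)).natDegree : ℝ) ≤ p₁.natDegree + 1 := by
    exact_mod_cast natDegree_polyMulRpowDerivPoly_le p₁ (r - 1) y
  refine summable_fourier_intCast_of_deriv_deriv (integrable_polyMulRpow p r hy hd)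
    (differentiable_polyMulRpow p r hy) ?_ ?_ ?_
  · rw [deriv_polyMulRpow p r hy]
    exact integrable_polyMulRpow _ _ hy (by linarith)
  · rw [deriv_polyMulRpow p r hy]
    exact differentiable_polyMulRpow _ _ hy
  · rw [deriv_polyMulRpow p r hy, deriv_polyMulRpow _ _ hy]
    exact integrable_polyMulRpow _ _ hy (by linarith)

end PolyMulRpow

theorem pow_mul_norm_rpow_eq_polyMulRpow (w : ℂ) (m : ℕ) (s : ℝ) :
    w ^ m * ((‖w‖ ^ (-(2 * s)) : ℝ) : ℂ) =
      polyMulRpow w.im ((X + C ((w.im : ℂ) * I)) ^ m) (-s) w.re := by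
  have hnorm : ‖w‖ ^ (-(2 * s)) = (w.re ^ 2 + w.im ^ 2) ^ (-s) := by
    rw [show -(2 * s) = 2 * -s by ring, Real.rpow_mul (norm_nonneg w), Real.rpow_two,
      Complex.sq_norm, Complex.normSq_apply, ← sq, ← sq]
  simp only [polyMulRpow, eval_pow, eval_add, eval_X, eval_C, re_add_im, hnorm]

theorem fourier_polyMulRpow_X_add_C_pow {y : ℝ} (hy : 0 < y) (m : ℕ) (s w : ℝ) :
    𝓕 (polyMulRpow y ((X + C ((y : ℂ) * I)) ^ m) (-s)) w =
      ((y ^ (1 + (m : ℝ) - 2 * s) : ℝ) : ℂ) *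
        ∫ t : ℝ, ((t : ℂ) + I) ^ m * (((t ^ 2 + 1 : ℝ) ^ (-s) : ℝ) : ℂ) *
          exp (-2 * π * I * w * y * t) := by
  have hscale (t : ℝ) : polyMulRpow y ((X + C ((y : ℂ) * I)) ^ m) (-s) (y * t) =
      (y : ℂ) ^ m * (((y ^ 2) ^ (-s) : ℝ) : ℂ) *
        (((t : ℂ) + I) ^ m * (((t ^ 2 + 1 : ℝ) ^ (-s) : ℝ) : ℂ)) := by
    rw [polyMulRpow, show (y * t) ^ 2 + y ^ 2 = y ^ 2 * (t ^ 2 + 1) by ring,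
      Real.mul_rpow (sq_nonneg y) (by positivity)]
    simp only [eval_pow, eval_add, eval_X, eval_C]
    rw [show (((y * t : ℝ)) : ℂ) + y * I = y * (t + I) by push_cast; ring, mul_pow]
    push_cast
    ring
  have hconst : y * (y ^ m * (y ^ 2) ^ (-s)) = y ^ (1 + (m : ℝ) - 2 * s) := by
    rw [Real.rpow_sub hy, Real.rpow_add hy, Real.rpow_one, Real.rpow_natCast,
      Real.rpow_neg (sq_nonneg y), ← Real.rpow_natCast y 2, ← Real.rpow_mul hy.le]
    push_cast
    ring
  have hcv (g : ℝ → ℂ) : ∫ v, g v = y • ∫ t, g (y * t) := by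
    rw [Measure.integral_comp_mul_left, abs_of_pos (inv_pos.2 hy), smul_smul,
      mul_inv_cancel₀ hy.ne', one_smul]
  rw [Real.fourier_real_eq_integral_exp_smul, hcv, ← hconst, Complex.real_smul]
  simp_rw [smul_eq_mul, hscale]
  rw [← integral_const_mul, ← integral_const_mul]
  congr 1 with t
  push_cast
  rw [show -2 * (π : ℂ) * (y * t) * w * I = -2 * π * I * w * y * t by ring]
  ring

theorem poisson_expansion_general (k : ℕ) (s : ℝ) (hs : (k : ℝ) + 1 < s)
    (z : ℂ) (hz : 0 < z.im) :
    (∑' n : ℤ, (z + (n : ℂ)) ^ (2 * k) * ((‖z + (n : ℂ)‖ ^ (-(2 * s)) : ℝ) : ℂ))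
      = ((z.im ^ (1 + 2 * (k : ℝ) - 2 * s) : ℝ) : ℂ) *
        ∑' n : ℤ,
          (∫ t : ℝ, ((t : ℂ) + Complex.I) ^ (2 * k) * (((t ^ 2 + 1 : ℝ) ^ (-s) : ℝ) : ℂ) *
              Complex.exp (-2 * Real.pi * Complex.I * (n : ℂ) * (z.im : ℂ) * (t : ℂ))) *
            Complex.exp (2 * Real.pi * Complex.I * (n : ℂ) * (z.re : ℂ)) := by
  set p := (X + C ((z.im : ℂ) * I)) ^ (2 * k)
  have hdeg : (p.natDegree : ℝ) + 2 * -s = -(2 * s - 2 * k) := by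
    simp only [p, natDegree_pow, natDegree_X_add_C]
    push_cast
    ring
  have hterm (n : ℤ) : (z + n) ^ (2 * k) * ((‖z + n‖ ^ (-(2 * s)) : ℝ) : ℂ) =
      polyMulRpow z.im p (-s) (z.re + n) := by
    simpa only [add_re, add_im, intCast_re, intCast_im, add_zero] using
      pow_mul_norm_rpow_eq_polyMulRpow (z + n) (2 * k) s
  have hdecay := isBigO_polyMulRpow_cocompact p (-s) hz.ne' (by linarith)
  rw [hdeg] at hdecay
  rw [tsum_congr hterm, Real.tsum_eq_tsum_fourier_of_rpow_decay_of_summable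
    (differentiable_polyMulRpow p (-s) hz.ne').continuous (by linarith) hdecay
    (summable_fourier_polyMulRpow p (-s) hz.ne' (by linarith)), ← tsum_mul_left]
  refine tsum_congr fun n => ?_
  rw [fourier_polyMulRpow_X_add_C_pow hz, fourier_coe_apply]
  push_cast [div_one]
  ring

/-- the Fourier (Poisson summation) expansion of
`f(z, -2k, s) = Σ_{n ∈ ℤ} (z+n)^(2k) |z+n|^(-2s)` for real `s > k + 1`. -/
theorem poisson_expansion (k : ℕ) (hk : 1 ≤ k) (s : ℝ) (hs : (k : ℝ) + 1 < s)
    (z : ℂ) (hz : 0 < z.im) :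
    (∑' n : ℤ, (z + (n : ℂ)) ^ (2 * k) * ((‖z + (n : ℂ)‖ ^ (-(2 * s)) : ℝ) : ℂ))
      = ((z.im ^ (1 + 2 * (k : ℝ) - 2 * s) : ℝ) : ℂ) *
        ∑' n : ℤ,
          (∫ t : ℝ, ((t : ℂ) + Complex.I) ^ (2 * k) * (((t ^ 2 + 1 : ℝ) ^ (-s) : ℝ) : ℂ) *
              Complex.exp (-2 * Real.pi * Complex.I * (n : ℂ) * (z.im : ℂ) * (t : ℂ))) *
            Complex.exp (2 * Real.pi * Complex.I * (n : ℂ) * (z.re : ℂ)) :=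
  poisson_expansion_general k s hs z hz
end

section
/- (Kummer's congruences.) Let p be an odd prime, let a ≥ 0 be an integer, and let n and m be positive integers with n ≡ m (mod (p−1)p^a) such that p−1 does not divide n (equivalently, p−1 divides neither n nor m). Then the p-adic valuation of the rational number (1 − p^{n−1})·B_n/n − (1 − p^{m−1})·B_m/m is at least a+1. -/
/-!
Fix `c` whose residue generates `(ℤ/p)ˣ` and let `M = p ^ N`. Writing
`c j = M ⌊c j / M⌋ + (c j mod M)`, expanding `(c j) ^ n` to first order modulo `M²` and summing
over `j < M` (multiplication by `c` permutes the residues mod `M`) gives Voronoi's congruence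
`(cⁿ - 1) ∑_{j<M} jⁿ ≡ n c^(n-1) M ∑_{j<M} j^(n-1) ⌊c j / M⌋ (mod M²)`.
As `∑_{j<M} jⁿ / M → Bₙ` p-adically (Faulhaber), the integers
`n c^(n-1) ∑_{j<M} j^(n-1) ⌊c j / M⌋` converge to `(cⁿ - 1) Bₙ`; discarding the terms with
`p ∣ j` produces the Euler factor `1 - p^(n-1)`. In what remains every `c j` is a unit mod `p`,
so by Euler's theorem the sums for `n` and `m` agree mod `p^(a+1)`. Pass to the limit and divide
by the `p`-adic unit `cⁿ - 1`.
-/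

open Finset Filter Topology
open scoped Nat

theorem Nat.pow_modEq_pow_of_modEq_totient {x k e₁ e₂ : ℕ} (hx : x.Coprime k)
    (he : e₁ ≡ e₂ [MOD φ k]) : x ^ e₁ ≡ x ^ e₂ [MOD k] := by
  rcases k.eq_zero_or_pos with rfl | hk
  · rw [Nat.totient_zero, Nat.modEq_zero_iff] at he
    rw [he]
  have : NeZero k := ⟨hk.ne'⟩
  have hord : orderOf (ZMod.unitOfCoprime x hx) ∣ φ k :=
    ZMod.card_units_eq_totient k ▸ orderOf_dvd_card
  rw [← ZMod.natCast_eq_natCast_iff]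
  simpa using congrArg Units.val (pow_eq_pow_iff_modEq.2 (he.of_dvd hord))

theorem sq_dvd_add_pow_sub_pow_sub {R : Type*} [CommRing R] {M t : R} (x : R) (n : ℕ)
    (ht : M ∣ t) : M ^ 2 ∣ (x + t) ^ n - x ^ n - n * (x + t) ^ (n - 1) * t := by
  have hpow : M ∣ (x + t) ^ (n - 1) - x ^ (n - 1) :=
    ht.trans (by simpa using sub_dvd_pow_sub_pow (x + t) x (n - 1))
  have hrw : (x + t) ^ n - x ^ n - n * (x + t) ^ (n - 1) * t
      = ((x + t) ^ n - x ^ (n - 1) * t * n - x ^ n)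
        - ((x + t) ^ (n - 1) - x ^ (n - 1)) * t * n := by
    ring
  rw [hrw, sq]
  exact dvd_sub ((mul_dvd_mul ht ht).trans (sq t ▸ sq_dvd_add_pow_sub_sub t x n))
    ((mul_dvd_mul hpow ht).mul_right _)

theorem Finset.sum_range_mul_mod {β : Type*} [AddCommMonoid β] {c M : ℕ} (hc : c.Coprime M)
    (f : ℕ → β) : ∑ j ∈ range M, f (c * j % M) = ∑ j ∈ range M, f j := by
  rcases M.eq_zero_or_pos with rfl | hM
  · simp
  have hinj : Set.InjOn (fun j => c * j % M) (range M) := fun i hi j hj hij =>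
    Nat.ModEq.eq_of_lt_of_lt (Nat.ModEq.cancel_left_of_coprime (Nat.coprime_comm.1 hc) hij)
      (mem_range.1 hi) (mem_range.1 hj)
  have himage : (range M).image (fun j => c * j % M) = range M :=
    eq_of_subset_of_card_le (image_subset_iff.2 fun j _ => mem_range.2 (Nat.mod_lt _ hM))
      (card_image_of_injOn hinj).ge
  rw [← sum_image hinj, himage]

def voronoiSum (c n M : ℕ) : ℕ := ∑ j ∈ range M, j ^ (n - 1) * (c * j / M)

def voronoiSumCoprime (p c n M : ℕ) : ℕ :=
  ∑ j ∈ range M with ¬p ∣ j, j ^ (n - 1) * (c * j / M)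

theorem sq_dvd_voronoi {c M : ℕ} (hc : c.Coprime M) (n : ℕ) :
    (M : ℤ) ^ 2 ∣ ((c : ℤ) ^ n - 1) * ∑ j ∈ range M, (j : ℤ) ^ n
      - n * c ^ (n - 1) * M * voronoiSum c n M := by
  have hterm : ∀ j, (M : ℤ) ^ 2 ∣ ((c * j : ℕ) : ℤ) ^ n - ((c * j % M : ℕ) : ℤ) ^ n
      - n * ((c * j : ℕ) : ℤ) ^ (n - 1) * (M * (c * j / M : ℕ)) := fun j => by
    have h := sq_dvd_add_pow_sub_pow_sub ((c * j % M : ℕ) : ℤ) n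
      (dvd_mul_right (M : ℤ) (c * j / M : ℕ))
    rwa [← Nat.cast_mul, ← Nat.cast_add, Nat.mod_add_div] at h
  refine (dvd_sum fun j (_ : j ∈ range M) => hterm j).trans (dvd_of_eq ?_)
  rw [sum_sub_distrib, sum_sub_distrib, sum_range_mul_mod hc (fun j => (j : ℤ) ^ n), voronoiSum]
  push_cast
  simp only [mul_sum, mul_pow, ← sum_sub_distrib]
  exact sum_congr rfl fun j _ => by ring

theorem voronoiSum_mul {p : ℕ} (hp : 0 < p) (c n M : ℕ) :
    voronoiSum c n (p * M)
      = voronoiSumCoprime p c n (p * M) + p ^ (n - 1) * voronoiSum c n M := by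
  rw [voronoiSum, voronoiSumCoprime, ← sum_filter_not_add_sum_filter (range (p * M)) (p ∣ ·)]
  congr 1
  have himage : (range (p * M)).filter (p ∣ ·) = (range M).image (p * ·) := by
    ext j
    simp only [mem_filter, mem_range, mem_image]
    constructor
    · rintro ⟨hj, i, rfl⟩
      exact ⟨i, Nat.lt_of_mul_lt_mul_left hj, rfl⟩
    · rintro ⟨i, hi, rfl⟩
      exact ⟨Nat.mul_lt_mul_of_pos_left hi hp, dvd_mul_right p i⟩
  rw [himage, sum_image fun i _ j _ h => Nat.eq_of_mul_eq_mul_left hp h, voronoiSum, mul_sum]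
  refine sum_congr rfl fun i _ => ?_
  rw [mul_left_comm c, Nat.mul_div_mul_left _ _ hp, mul_pow, mul_assoc]

theorem dvd_voronoiSumCoprime_sub {p c n m : ℕ} (hp : p.Prime) (hc : c.Coprime p) {k : ℕ}
    (h : n - 1 ≡ m - 1 [MOD φ (p ^ k)]) (M : ℕ) :
    (p : ℤ) ^ k ∣ c ^ (n - 1) * voronoiSumCoprime p c n M
      - c ^ (m - 1) * voronoiSumCoprime p c m M := by
  simp only [voronoiSumCoprime, Nat.cast_sum, mul_sum, ← sum_sub_distrib]
  refine dvd_sum fun j hj => ?_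
  have hcj : (c * j).Coprime (p ^ k) :=
    (hc.mul_left ((hp.coprime_iff_not_dvd.2 (mem_filter.1 hj).2).symm)).pow_right k
  have hdvd := Nat.modEq_iff_dvd.1 (Nat.pow_modEq_pow_of_modEq_totient hcj h).symm
  push_cast at hdvd ⊢
  convert dvd_mul_of_dvd_left hdvd ((c * j / M : ℕ) : ℤ) using 1
  push_cast
  ring

namespace Padic

variable {p : ℕ} [Fact p.Prime]

theorem tendsto_pow_mul_intCast (w : ℕ → ℤ) :
    Tendsto (fun N => (p : ℚ_[p]) ^ N * w N) atTop (𝓝 0) := by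
  refine squeeze_zero_norm (a := fun N => ‖(p : ℚ_[p]) ^ N‖) (fun N => ?_)
    (by simpa using (tendsto_pow_atTop_nhds_zero_of_norm_lt_one (norm_p_lt_one (p := p))).norm)
  rw [norm_mul]
  exact mul_le_of_le_one_right (norm_nonneg _) (norm_int_le_one _)

theorem tendsto_sum_range_pow_div (n : ℕ) :
    Tendsto (fun N => (∑ j ∈ range (p ^ N), (j : ℚ_[p]) ^ n) / (p : ℚ_[p]) ^ N) atTop
      (𝓝 (bernoulli n)) := by
  set f : ℚ_[p] → ℚ_[p] := fun x =>
    ∑ i ∈ range (n + 1), (bernoulli i : ℚ_[p]) * (n + 1).choose i / (n + 1) * x ^ (n - i)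
  have hf : ∀ N, (∑ j ∈ range (p ^ N), (j : ℚ_[p]) ^ n) / (p : ℚ_[p]) ^ N
      = f ((p : ℚ_[p]) ^ N) := by
    intro N
    have hpN : (p : ℚ_[p]) ^ N ≠ 0 :=
      pow_ne_zero _ (Nat.cast_ne_zero.2 (Fact.out : p.Prime).ne_zero)
    have h := congrArg (Rat.cast : ℚ → ℚ_[p]) (sum_range_pow (p ^ N) n)
    push_cast at h
    rw [h, sum_div]
    refine sum_congr rfl fun i hi => ?_
    rw [show n + 1 - i = n - i + 1 by have := mem_range.1 hi; omega, pow_succ]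
    field_simp
  have hf0 : f 0 = bernoulli n := by
    simp only [f]
    rw [sum_range_succ, Nat.choose_succ_self_right, sum_eq_zero fun i hi => by
      rw [zero_pow (by have := mem_range.1 hi; omega), mul_zero]]
    push_cast
    field_simp
    simp
  simp only [hf]
  rw [← hf0]
  exact ((by fun_prop : Continuous f).tendsto 0).comp
    (tendsto_pow_atTop_nhds_zero_of_norm_lt_one norm_p_lt_one)

theorem tendsto_voronoiSum {c : ℕ} (hc : c.Coprime p) (n : ℕ) :
    Tendsto (fun N => (n * c ^ (n - 1) * voronoiSum c n (p ^ N) : ℚ_[p])) atTop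
      (𝓝 (((c : ℚ_[p]) ^ n - 1) * bernoulli n)) := by
  choose w hw using fun N => sq_dvd_voronoi (hc.pow_right N) n
  have h := ((tendsto_sum_range_pow_div n).const_mul ((c : ℚ_[p]) ^ n - 1)).sub
    (tendsto_pow_mul_intCast w)
  rw [sub_zero] at h
  refine h.congr fun N => ?_
  have hpN : (p : ℚ_[p]) ^ N ≠ 0 :=
    pow_ne_zero _ (Nat.cast_ne_zero.2 (Fact.out : p.Prime).ne_zero)
  have hN := congrArg (Int.cast : ℤ → ℚ_[p]) (hw N)
  push_cast at hN
  field_simp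
  linear_combination hN

theorem tendsto_voronoiSumCoprime {c n : ℕ} (hc : c.Coprime p) (hn : n ≠ 0) :
    Tendsto (fun N => (c ^ (n - 1) * voronoiSumCoprime p c n (p ^ N) : ℚ_[p])) atTop
      (𝓝 (((c : ℚ_[p]) ^ n - 1) * ((1 - (p : ℚ_[p]) ^ (n - 1)) * bernoulli n / n))) := by
  have h := tendsto_voronoiSum hc n
  have h' := (((tendsto_add_atTop_iff_nat 1).2 h).sub
    (h.const_mul ((p : ℚ_[p]) ^ (n - 1)))).div_const (n : ℚ_[p])
  rw [← tendsto_add_atTop_iff_nat 1]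
  have hn' : (n : ℚ_[p]) ≠ 0 := Nat.cast_ne_zero.2 hn
  convert h' using 2 with N
  · rw [pow_succ', voronoiSum_mul (Fact.out : p.Prime).pos]
    push_cast
    field_simp
    ring
  · field_simp

theorem norm_natCast_sub_le_of_modEq {x y k : ℕ} (h : x ≡ y [MOD p ^ k]) :
    ‖(x : ℚ_[p]) - y‖ ≤ (p : ℝ) ^ (-(k : ℤ)) := by
  have hdvd : ((p : ℤ) ^ k) ∣ (x : ℤ) - y := by exact_mod_cast Nat.modEq_iff_dvd.1 h.symm
  exact_mod_cast (norm_int_le_pow_iff_dvd _ k).2 hdvd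

theorem exists_norm_pow_sub_one_eq_one :
    ∃ c : ℕ, c.Coprime p ∧ ∀ k, ¬(p - 1) ∣ k → ‖(c : ℚ_[p]) ^ k - 1‖ = 1 := by
  obtain ⟨g, hg⟩ := IsCyclic.exists_ofOrder_eq_natCard (α := (ZMod p)ˣ)
  rw [Nat.card_eq_fintype_card, ZMod.card_units] at hg
  refine ⟨(g : ZMod p).val, ZMod.val_coe_unit_coprime g, fun k hk => ?_⟩
  refine le_antisymm (by exact_mod_cast norm_int_le_one ((g : ZMod p).val ^ k - 1))
    (not_lt.1 fun hlt => hk ?_)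
  have hdvd : (p : ℤ) ∣ (g : ZMod p).val ^ k - 1 :=
    norm_intCast_lt_one_iff.1 (by exact_mod_cast hlt)
  rw [← ZMod.intCast_zmod_eq_zero_iff_dvd] at hdvd
  push_cast at hdvd
  rw [ZMod.natCast_zmod_val, sub_eq_zero] at hdvd
  exact hg ▸ orderOf_dvd_of_pow_eq_one (Units.ext (by push_cast; exact hdvd))

end Padic

theorem norm_sub_le_of_norm_mul_sub_mul_le {K : Type*} [NormedField K] [IsUltrametricDist K]
    {u v x y : K} {ε : ℝ} (hu : ‖u‖ = 1) (hy : ‖y‖ ≤ 1) (huv : ‖u - v‖ ≤ ε)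
    (h : ‖u * x - v * y‖ ≤ ε) : ‖x - y‖ ≤ ε := by
  calc ‖x - y‖ = ‖(u * x - v * y) + -((u - v) * y)‖ := by
        rw [← one_mul ‖x - y‖, ← hu, ← norm_mul]; ring_nf
    _ ≤ ε := (IsUltrametricDist.norm_add_le_max _ _).trans <| max_le h <| by
        rw [norm_neg, norm_mul]; exact (mul_le_of_le_one_right (norm_nonneg _) hy).trans huv

theorem kummer_congruences_general (p : ℕ) (hp : p.Prime) (a : ℕ)
    (n m : ℕ) (hcong : n ≡ m [MOD (p - 1) * p ^ a]) (hnd : ¬ (p - 1) ∣ n) :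
    padicNorm p ((1 - (p : ℚ) ^ (n - 1)) * bernoulli n / n
        - (1 - (p : ℚ) ^ (m - 1)) * bernoulli m / m)
      ≤ (p : ℚ) ^ (-(a + 1 : ℤ)) := by
  have : Fact p.Prime := ⟨hp⟩
  have hmd : ¬ (p - 1) ∣ m := fun h =>
    hnd (Nat.modEq_zero_iff_dvd.1 ((hcong.of_mul_right _).trans (Nat.modEq_zero_iff_dvd.2 h)))
  have hn : n ≠ 0 := by rintro rfl; exact hnd (dvd_zero _)
  have hm : m ≠ 0 := by rintro rfl; exact hmd (dvd_zero _)
  have htot : n ≡ m [MOD φ (p ^ (a + 1))] := by rwa [Nat.totient_prime_pow_succ hp, mul_comm]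
  have htot' : n - 1 ≡ m - 1 [MOD φ (p ^ (a + 1))] :=
    Nat.ModEq.add_right_cancel' 1 (by rwa [Nat.sub_add_cancel (Nat.one_le_iff_ne_zero.2 hn),
      Nat.sub_add_cancel (Nat.one_le_iff_ne_zero.2 hm)])
  obtain ⟨c, hc, hunit⟩ := Padic.exists_norm_pow_sub_one_eq_one (p := p)
  have hlim_n := Padic.tendsto_voronoiSumCoprime hc hn
  have hlim_m := Padic.tendsto_voronoiSumCoprime hc hm
  have hclose := le_of_tendsto' (hlim_n.sub hlim_m).norm fun N => by
    exact_mod_cast (Padic.norm_int_le_pow_iff_dvd _ _).2 (dvd_voronoiSumCoprime_sub hp hc htot' _)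
  have hint := le_of_tendsto' hlim_m.norm fun N => by exact_mod_cast Padic.norm_int_le_one _
  rw [norm_mul, hunit m hmd, one_mul] at hint
  have hpow := Padic.norm_natCast_sub_le_of_modEq
    (Nat.pow_modEq_pow_of_modEq_totient (hc.pow_right (a + 1)) htot)
  rw [← sub_sub_sub_cancel_right _ _ (1 : ℚ_[p])] at hpow
  rw [← Rat.cast_le (K := ℝ), ← Padic.eq_padicNorm]
  push_cast at hpow hclose ⊢
  exact norm_sub_le_of_norm_mul_sub_mul_le (hunit n hnd) hint hpow hclose

/-- Kummer's congruences: for an odd prime `p` and positive integers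
`n ≡ m (mod (p-1)p^a)` with `(p-1) ∤ n`, the rational number
`(1 - p^(n-1)) Bₙ/n - (1 - p^(m-1)) Bₘ/m` has `p`-adic valuation at least `a + 1`,
i.e. `p`-adic norm at most `p^(-(a+1))`.  Here `bernoulli` is Mathlib's Bernoulli number
with the convention `Σ Bₙ tⁿ/n! = t/(eᵗ - 1)`. -/
theorem kummer_congruences (p : ℕ) (hp : p.Prime) (hodd : Odd p) (a : ℕ)
    (n m : ℕ) (hn : 0 < n) (hm : 0 < m)
    (hcong : n ≡ m [MOD (p - 1) * p ^ a]) (hnd : ¬ (p - 1) ∣ n) :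
    padicNorm p ((1 - (p : ℚ) ^ (n - 1)) * bernoulli n / n
        - (1 - (p : ℚ) ^ (m - 1)) * bernoulli m / m)
      ≤ (p : ℚ) ^ (-(a + 1 : ℤ)) :=
  kummer_congruences_general p hp a n m hcong hnd
end
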